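/- arXiv:2308.10455 — 2 statements merged into one kernel-verified Lean document; each statement's English description precedes it below -/
import Mathlib

section
/- For a linear map T from the real polynomial ring ℝ[x₁,…,xₙ] to itself, there exist unique polynomials q_α ∈ ℝ[x₁,…,xₙ] for each multi-index α ∈ ℕ₀ⁿ such that T = ∑_α q_α · ∂^α, where ∂^α denotes the partial differential operator of multi-degree α. -/
/-!
On monomials, `∂^α x^γ` vanishes unless `α ≤ γ`, and `∂^γ x^γ = γ!`. Evaluating
`T = ∑_α q_α ∂^α` at `x^γ` therefore gives `γ! q_γ + ∑_{α < γ} q_α ∂^α x^γ = T x^γ`, a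
triangular system in the coefficients over the well-founded order on multi-indices: it
determines `q_γ` from the `q_α` with `α < γ`, hence has exactly one solution. Since both sides
are linear, agreement on monomials is the whole condition.
-/

open MvPolynomial

/-- The constant-coefficient differential operator `∂^α = ∂₁^{α₁} ⋯ ∂ₙ^{αₙ}`
on the polynomial ring `ℝ[x₁,…,xₙ]`. -/
noncomputable def partialPow (n : ℕ) (α : Fin n →₀ ℕ) :
    Module.End ℝ (MvPolynomial (Fin n) ℝ) :=
  (List.ofFn fun i : Fin n => ((MvPolynomial.pderiv (R := ℝ) i).toLinearMap) ^ (α i)).prod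

open Finsupp in
theorem MvPolynomial.pderiv_pow_monomial {R σ : Type*} [CommSemiring R] (i : σ) (k : ℕ)
    (γ : σ →₀ ℕ) (c : R) :
    ((pderiv i).toLinearMap ^ k) (monomial γ c)
      = monomial (γ - single i k) (c * (γ i).descFactorial k) := by
  induction k with
  | zero => simp
  | succ k ih =>
    rw [pow_succ', Module.End.mul_apply, ih, Derivation.coeFn_coe, pderiv_monomial,
      tsub_tsub, ← single_add, tsub_apply, single_eq_same, Nat.descFactorial_succ,
      Nat.cast_mul, mul_assoc, mul_comm (((γ i).descFactorial k : ℕ) : R)]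

open Finsupp in
theorem MvPolynomial.list_prod_pderiv_pow_monomial {R σ : Type*} [CommSemiring R]
    (α : σ →₀ ℕ) {l : List σ} (hl : l.Nodup) (γ : σ →₀ ℕ) (c : R) :
    (l.map fun i => (pderiv i).toLinearMap ^ α i).prod (monomial γ c)
      = monomial (γ - (l.map fun i => single i (α i)).sum)
          (c * (l.map fun i => ((γ i).descFactorial (α i) : R)).prod) := by
  induction l generalizing γ c with
  | nil => simp
  | cons i l ih =>
    obtain ⟨hi, hl⟩ := List.nodup_cons.mp hl
    have hl_sum : (l.map fun j => single j (α j)).sum i = 0 := by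
      rw [← applyAddHom_apply, map_list_sum, List.map_map, List.sum_eq_zero fun x hx => ?_]
      obtain ⟨j, hj, rfl⟩ := List.mem_map.mp hx
      exact single_eq_of_ne (ne_of_mem_of_not_mem hj hi).symm
    simp only [List.map_cons, List.prod_cons, List.sum_cons, Module.End.mul_apply]
    rw [ih hl, pderiv_pow_monomial, tsub_apply, hl_sum, Nat.sub_zero, tsub_tsub, add_comm,
      mul_assoc, mul_comm (List.prod _)]

theorem existsUnique_recursion_of_wellFoundedLT {ι X : Type*} [Preorder ι] [WellFoundedLT ι]
    [Nonempty X] (F : (ι → X) → ι → X)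
    (hF : ∀ q q' γ, (∀ β < γ, q β = q' β) → F q γ = F q' γ) :
    ∃! q : ι → X, ∀ γ, q γ = F q γ := by
  classical
  let q := wellFounded_lt.fix fun γ rec =>
    F (fun β => if h : β < γ then rec β h else Classical.arbitrary X) γ
  have hq : ∀ γ, q γ = F q γ := fun γ =>
    (wellFounded_lt.fix_eq _ γ).trans (hF _ _ γ fun β hβ => dif_pos hβ)
  refine ⟨q, hq, fun q' hq' => funext fun γ => ?_⟩
  induction γ using WellFoundedLT.induction with
  | ind γ ih => rw [hq', hq, hF q' q γ ih]

theorem MvPolynomial.linearMap_eq_iff_monomial_one {R σ M : Type*} [CommSemiring R]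
    [AddCommMonoid M] [Module R M] (f g : MvPolynomial σ R →ₗ[R] M) :
    f = g ↔ ∀ s, f (monomial s 1) = g (monomial s 1) :=
  ⟨fun h _ => h ▸ rfl, fun h => linearMap_ext fun s => LinearMap.ext_ring (h s)⟩

theorem partialPow_monomial (n : ℕ) (α γ : Fin n →₀ ℕ) (c : ℝ) :
    partialPow n α (monomial γ c)
      = monomial (γ - α) (c * ∏ i, ((γ i).descFactorial (α i) : ℝ)) := by
  rw [partialPow, List.ofFn_eq_map, list_prod_pderiv_pow_monomial α (List.nodup_finRange n),
    ← List.ofFn_eq_map, List.sum_ofFn, Finsupp.univ_sum_single, ← List.ofFn_eq_map,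
    List.prod_ofFn]

theorem partialPow_monomial_of_not_le (n : ℕ) {α γ : Fin n →₀ ℕ} (c : ℝ) (h : ¬α ≤ γ) :
    partialPow n α (monomial γ c) = 0 := by
  obtain ⟨i, hi⟩ : ∃ i, γ i < α i := by simpa [Finsupp.le_def] using h
  rw [partialPow_monomial, Finset.prod_eq_zero (Finset.mem_univ i)
    (by rw [Nat.cast_eq_zero, Nat.descFactorial_eq_zero_iff_lt]; exact hi), mul_zero,
    monomial_zero]

theorem partialPow_monomial_self (n : ℕ) (γ : Fin n →₀ ℕ) (c : ℝ) :
    partialPow n γ (monomial γ c) = C (c * ∏ i, ((γ i).factorial : ℝ)) := by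
  simp only [partialPow_monomial, tsub_self, Nat.descFactorial_self, ← C_apply]

theorem partialPow_eq_zero_of_forall_not_le (n : ℕ) {α : Fin n →₀ ℕ}
    {p : MvPolynomial (Fin n) ℝ} (h : ∀ s ∈ p.support, ¬α ≤ s) : partialPow n α p = 0 := by
  rw [p.as_sum, map_sum]
  exact Finset.sum_eq_zero fun s hs => partialPow_monomial_of_not_le n _ (h s hs)

theorem finite_support_mul_partialPow (n : ℕ) (q : (Fin n →₀ ℕ) → MvPolynomial (Fin n) ℝ)
    (p : MvPolynomial (Fin n) ℝ) :
    (Function.support fun α => q α * partialPow n α p).Finite := by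
  refine (p.support.biUnion Finset.Iic).finite_toSet.subset fun α hα => ?_
  by_contra hα'
  simp only [Finset.coe_biUnion, Set.mem_iUnion, Finset.mem_coe, Finset.mem_Iic,
    not_exists] at hα'
  exact hα (mul_eq_zero_of_right _ (partialPow_eq_zero_of_forall_not_le n hα'))

noncomputable def diffOp (n : ℕ) (q : (Fin n →₀ ℕ) → MvPolynomial (Fin n) ℝ) :
    Module.End ℝ (MvPolynomial (Fin n) ℝ) where
  toFun p := ∑ᶠ α, q α * partialPow n α p
  map_add' p p' := by
    simp only [map_add, mul_add]
    exact finsum_add_distrib (finite_support_mul_partialPow n q p)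
      (finite_support_mul_partialPow n q p')
  map_smul' c p := by
    simp only [map_smul, mul_smul_comm, RingHom.id_apply]
    exact (smul_finsum c _).symm

theorem diffOp_apply (n : ℕ) (q : (Fin n →₀ ℕ) → MvPolynomial (Fin n) ℝ)
    (p : MvPolynomial (Fin n) ℝ) : diffOp n q p = ∑ᶠ α, q α * partialPow n α p :=
  rfl

theorem diffOp_monomial_one (n : ℕ) (q : (Fin n →₀ ℕ) → MvPolynomial (Fin n) ℝ)
    (γ : Fin n →₀ ℕ) :
    diffOp n q (monomial γ 1) = (∏ i, ((γ i).factorial : ℝ)) • q γ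
      + ∑ β ∈ Finset.Iio γ, q β * partialPow n β (monomial γ 1) := by
  rw [diffOp_apply, finsum_eq_sum_of_support_subset (s := Finset.Iic γ) _ fun α hα => ?_,
    ← Finset.Iio_insert, Finset.sum_insert Finset.notMem_Iio_self, partialPow_monomial_self,
    one_mul, smul_eq_C_mul, mul_comm]
  by_contra hα'
  exact hα (mul_eq_zero_of_right _ (partialPow_monomial_of_not_le n 1 (by simpa using hα')))

theorem diffOp_eq_iff (n : ℕ) (q : (Fin n →₀ ℕ) → MvPolynomial (Fin n) ℝ)
    (T : Module.End ℝ (MvPolynomial (Fin n) ℝ)) :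
    diffOp n q = T ↔ ∀ γ, q γ = (∏ i, ((γ i).factorial : ℝ))⁻¹ •
      (T (monomial γ 1) - ∑ β ∈ Finset.Iio γ, q β * partialPow n β (monomial γ 1)) := by
  rw [linearMap_eq_iff_monomial_one]
  refine forall_congr' fun γ => ?_
  rw [diffOp_monomial_one, eq_inv_smul_iff₀ (Finset.prod_ne_zero_iff.mpr fun i _ =>
    Nat.cast_ne_zero.mpr (Nat.factorial_ne_zero _)), eq_sub_iff_add_eq]

/-- Every linear map `T : ℝ[x₁,…,xₙ] → ℝ[x₁,…,xₙ]` has a unique representation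
`T = ∑_α q_α ∂^α` with polynomial coefficients `q_α`. -/
theorem stmt0 (n : ℕ) (T : Module.End ℝ (MvPolynomial (Fin n) ℝ)) :
    ∃! q : (Fin n →₀ ℕ) → MvPolynomial (Fin n) ℝ,
      ∀ p : MvPolynomial (Fin n) ℝ,
        T p = ∑ᶠ α : Fin n →₀ ℕ, q α * (partialPow n α p) := by
  have h : ∀ q, (∀ p, T p = ∑ᶠ α, q α * partialPow n α p) ↔ diffOp n q = T := fun q =>
    ⟨fun hq => LinearMap.ext fun p => (hq p).symm, fun hq p => by rw [← hq, diffOp_apply]⟩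
  simp only [existsUnique_congr h, diffOp_eq_iff]
  refine existsUnique_recursion_of_wellFoundedLT _ fun q q' γ hqq' => ?_
  rw [Finset.sum_congr rfl fun β hβ => by rw [hqq' β (Finset.mem_Iio.mp hβ)]]
end

section
/- Let k ≥ 3 and a ∈ ℝ \ {0}. The operator exp(a∂_x^k) = ∑_{j≥0} (a^j/j!)·∂_x^{jk} on ℝ[x] is not a positivity preserver: there exists a polynomial p ≥ 0 on ℝ such that exp(a∂_x^k)p takes a negative value. -/
/-- The operator `exp(a ∂_x^k) = ∑_{j≥0} (a^j/j!) ∂_x^{jk}` applied to a polynomial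
(only finitely many terms are nonzero). -/
noncomputable def expDk (a : ℝ) (k : ℕ) (p : Polynomial ℝ) : Polynomial ℝ :=
  ∑ᶠ j : ℕ, (a ^ j / (j.factorial : ℝ)) •
    (((Polynomial.derivative : Module.End ℝ (Polynomial ℝ))) ^ (j * k)) p

/-!
The witness is `p = (x - a x^(k-1))² = x² - 2a x^k + a² x^(2k-2)`. Its degree is below `2k`, so
`exp(a ∂^k) p = p + a p^(k)`, and at `x = 0` this equals `0 + a · k! · (-2a) = -2 a² k! < 0`.
-/

open Polynomial

namespace Polynomial

variable {R : Type*} [CommRing R]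

theorem eval_zero_iterate_derivative (p : R[X]) (n : ℕ) :
    (derivative^[n] p).eval 0 = n.factorial * p.coeff n := by
  rw [← coeff_zero_eq_eval_zero, coeff_iterate_derivative, zero_add, Nat.descFactorial_self,
    nsmul_eq_mul]

theorem coeff_sq_X_sub_C_mul_X_pow_succ (a : R) {n : ℕ} (hn : n ≠ 1) :
    ((X - C a * X ^ n) ^ 2).coeff (n + 1) = -2 * a := by
  have hexpand : (X - C a * X ^ n) ^ 2 =
      X ^ 2 - C (2 * a) * X ^ (n + 1) + C (a ^ 2) * X ^ (2 * n) := by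
    simp only [map_mul, map_pow, map_ofNat]
    ring
  rw [hexpand]
  simp only [coeff_add, coeff_sub, coeff_C_mul, coeff_X_pow, if_true,
    if_neg (show n + 1 ≠ 2 by omega), if_neg (show n + 1 ≠ 2 * n by omega)]
  ring

theorem natDegree_sq_X_sub_C_mul_X_pow_le (a : R) {n : ℕ} (hn : n ≠ 0) :
    ((X - C a * X ^ n) ^ 2).natDegree ≤ 2 * n := by
  compute_degree
  omega

end Polynomial

theorem expDk_eq_add_of_natDegree_lt (a : ℝ) {k : ℕ} {p : ℝ[X]} (hp : p.natDegree < 2 * k) :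
    expDk a k p = p + a • derivative^[k] p := by
  have hsupp : Function.support (fun j : ℕ => (a ^ j / (j.factorial : ℝ)) •
      ((derivative : Module.End ℝ ℝ[X]) ^ (j * k)) p) ⊆ (({0, 1} : Finset ℕ) : Set ℕ) := by
    intro j hj
    by_contra hj01
    simp only [Finset.coe_insert, Finset.coe_singleton, Set.mem_insert_iff,
      Set.mem_singleton_iff, not_or] at hj01
    apply hj
    dsimp only
    rw [Module.End.pow_apply, iterate_derivative_eq_zero, smul_zero]
    exact hp.trans_le (Nat.mul_le_mul_right k (by omega))
  rw [expDk, finsum_eq_sum_of_support_subset _ hsupp, Finset.sum_pair zero_ne_one]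
  simp [Module.End.pow_apply]

/-- For `k ≥ 3` and `a ≠ 0`, the operator `exp(a ∂_x^k)` is not a positivity preserver:
some polynomial nonnegative on `ℝ` is mapped to a polynomial taking a negative value. -/
theorem stmt11 (k : ℕ) (hk : 3 ≤ k) (a : ℝ) (ha : a ≠ 0) :
    ∃ p : Polynomial ℝ, (∀ x : ℝ, 0 ≤ p.eval x) ∧
      ∃ x : ℝ, (expDk a k p).eval x < 0 := by
  obtain ⟨n, rfl⟩ : ∃ n, k = n + 1 := ⟨k - 1, by omega⟩
  set p : ℝ[X] := (X - C a * X ^ n) ^ 2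
  refine ⟨p, fun x => by simp only [p, eval_pow]; exact sq_nonneg _, 0, ?_⟩
  have hdeg : p.natDegree < 2 * (n + 1) :=
    (natDegree_sq_X_sub_C_mul_X_pow_le a (by omega)).trans_lt (by omega)
  have hp0 : p.eval 0 = 0 := by simp [p, zero_pow (show n ≠ 0 by omega)]
  rw [expDk_eq_add_of_natDegree_lt a hdeg, eval_add, eval_smul, hp0,
    eval_zero_iterate_derivative, coeff_sq_X_sub_C_mul_X_pow_succ a (by omega), smul_eq_mul]
  have hfac : (0 : ℝ) < (n + 1).factorial := by exact_mod_cast (n + 1).factorial_pos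
  have ha2 : (0 : ℝ) < a ^ 2 := by positivity
  nlinarith [mul_pos hfac ha2]
end
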